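/- For any finite simple graph G, the sparing number of G equals the minimum, over all independent sets I of G, of the number of edges of G with no end vertex in I; equivalently, φ(G) = |E(G)| minus the maximum, over all independent sets I of G, of the number of edges of G with at least one end vertex in I. -/

import Mathlib

open Pointwise

def IsWeakIASL {V : Type*} (G : SimpleGraph V) (f : V → Finset ℕ) : Prop :=
  Function.Injective f ∧ (∀ v, (f v).Nonempty) ∧
    ∀ u v, G.Adj u v →
      ((f u + f v).card = (f u).card ∨ (f u + f v).card = (f v).card)

def monoEdgeSet {V : Type*} (G : SimpleGraph V) (f : V → Finset ℕ) : Set (Sym2 V) :=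
  {e | e ∈ G.edgeSet ∧ ∃ u v, e = s(u, v) ∧ (f u + f v).card = 1}

noncomputable def sparingNumber {V : Type*} (G : SimpleGraph V) : ℕ :=
  sInf {n | ∃ f : V → Finset ℕ, IsWeakIASL G f ∧ (monoEdgeSet G f).ncard = n}

/-!
For nonempty finite sets of naturals, Cauchy–Davenport gives `|A + B| ≥ |A| + |B| - 1`, so a
labeling is weak exactly when the vertices whose labels are not singletons form an independent
set `I`, and its mono-indexed edges are then exactly the edges avoiding `I`. Conversely every
independent set `I` arises this way: give the vertices of `I` two-element intervals and the others
singletons, all with distinct minima. The second formula follows because every edge either avoids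
or meets `I`.
-/

theorem Finset.card_add_eq_one_iff {α : Type*} [Add α] [IsCancelAdd α] [DecidableEq α]
    {s t : Finset α} (hs : s.Nonempty) (ht : t.Nonempty) :
    (s + t).card = 1 ↔ s.card = 1 ∧ t.card = 1 := by
  refine ⟨fun h => ?_, fun ⟨hs1, ht1⟩ => ?_⟩
  · have hs_le := Finset.card_le_card_add_right (s := s) ht
    have ht_le := Finset.card_le_card_add_left (t := t) hs
    have := hs.card_pos
    have := ht.card_pos
    omega
  · obtain ⟨a, rfl⟩ := Finset.card_eq_one.mp hs1
    obtain ⟨b, rfl⟩ := Finset.card_eq_one.mp ht1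
    simp [Finset.singleton_add_singleton]

theorem Finset.card_eq_one_of_card_add_eq_card_left {α : Type*} [LinearOrder α] [Add α]
    [IsCancelAdd α] [AddLeftMono α] [AddRightMono α] {s t : Finset α}
    (hs : s.Nonempty) (ht : t.Nonempty) (h : (s + t).card = s.card) : t.card = 1 := by
  have := cauchy_davenport_add_of_linearOrder_isCancelAdd hs ht
  have := hs.card_pos
  have := ht.card_pos
  omega

theorem Finset.card_eq_one_of_card_add_eq_card_right {α : Type*} [LinearOrder α] [Add α]
    [IsCancelAdd α] [AddLeftMono α] [AddRightMono α] {s t : Finset α}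
    (hs : s.Nonempty) (ht : t.Nonempty) (h : (s + t).card = t.card) : s.card = 1 := by
  have := cauchy_davenport_add_of_linearOrder_isCancelAdd hs ht
  have := hs.card_pos
  have := ht.card_pos
  omega

section

variable {V : Type*} {G : SimpleGraph V} {f : V → Finset ℕ}

theorem isWeakIASL_iff : IsWeakIASL G f ↔ Function.Injective f ∧ (∀ v, (f v).Nonempty) ∧
    ∀ u v, G.Adj u v → (f u).card = 1 ∨ (f v).card = 1 := by
  refine and_congr_right fun _ => and_congr_right fun hne => forall₂_congr fun u v =>
    imp_congr_right fun _ => ⟨?_, ?_⟩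
  · rintro (h | h)
    · exact .inr (Finset.card_eq_one_of_card_add_eq_card_left (hne u) (hne v) h)
    · exact .inl (Finset.card_eq_one_of_card_add_eq_card_right (hne u) (hne v) h)
  · rintro (h | h)
    · obtain ⟨a, ha⟩ := Finset.card_eq_one.mp h
      exact .inr (by rw [ha, Finset.card_singleton_add])
    · obtain ⟨b, hb⟩ := Finset.card_eq_one.mp h
      exact .inl (by rw [hb, Finset.card_add_singleton])

theorem monoEdgeSet_eq_of_nonempty (hf : ∀ v, (f v).Nonempty) :
    monoEdgeSet G f = {e | e ∈ G.edgeSet ∧ ∀ v ∈ e, (f v).card = 1} := by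
  ext e
  induction e using Sym2.ind with
  | _ u v =>
    simp only [monoEdgeSet, Set.mem_ofPred_eq, Sym2.forall_mem_pair]
    refine and_congr_right fun _ => ⟨?_, fun h => ⟨u, v, rfl, ?_⟩⟩
    · rintro ⟨u', v', huv, hcard⟩
      rw [Finset.card_add_eq_one_iff (hf u') (hf v')] at hcard
      rcases Sym2.eq_iff.mp huv with ⟨rfl, rfl⟩ | ⟨rfl, rfl⟩
      exacts [hcard, hcard.symm]
    · exact (Finset.card_add_eq_one_iff (hf u) (hf v)).mpr h

theorem exists_isWeakIASL_card_eq_one_iff [Countable V] {I : Set V}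
    (hI : ∀ u ∈ I, ∀ v ∈ I, ¬ G.Adj u v) :
    ∃ f : V → Finset ℕ, IsWeakIASL G f ∧ ∀ v, (f v).card = 1 ↔ v ∉ I := by
  classical
  obtain ⟨g, hg⟩ := Countable.exists_injective_nat V
  let f : V → Finset ℕ := fun v => Finset.Icc (g v) (g v + if v ∈ I then 1 else 0)
  have hcard : ∀ v, (f v).card = 1 ↔ v ∉ I := fun v => by
    by_cases hv : v ∈ I <;> simp [f, hv]; omega
  have hmin : ∀ v, g v ∈ f v := fun v => Finset.mem_Icc.mpr ⟨le_rfl, Nat.le_add_right _ _⟩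
  have hinj : Function.Injective f := fun a b hab => by
    have hga : g a ∈ f b := hab ▸ hmin a
    have hgb : g b ∈ f a := hab ▸ hmin b
    exact hg (le_antisymm (Finset.mem_Icc.mp hgb).1 (Finset.mem_Icc.mp hga).1)
  refine ⟨f, isWeakIASL_iff.mpr ⟨hinj, fun v => ⟨g v, hmin v⟩, fun u v huv => ?_⟩, hcard⟩
  by_cases hu : u ∈ I
  · exact .inr ((hcard v).mpr fun hv => hI u hu v hv huv)
  · exact .inl ((hcard u).mpr hu)

theorem setOf_ncard_monoEdgeSet_eq [Countable V] :
    {n | ∃ f : V → Finset ℕ, IsWeakIASL G f ∧ (monoEdgeSet G f).ncard = n} =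
      {n | ∃ I : Set V, (∀ u ∈ I, ∀ v ∈ I, ¬ G.Adj u v) ∧
        {e | e ∈ G.edgeSet ∧ ∀ v ∈ e, v ∉ I}.ncard = n} := by
  ext n
  constructor
  · rintro ⟨f, hf, rfl⟩
    obtain ⟨-, hne, hadj⟩ := isWeakIASL_iff.mp hf
    refine ⟨{v | (f v).card ≠ 1}, fun u hu v hv huv => (hadj u v huv).elim hu hv, ?_⟩
    simp [monoEdgeSet_eq_of_nonempty hne]
  · rintro ⟨I, hI, rfl⟩
    obtain ⟨f, hf, hcard⟩ := exists_isWeakIASL_card_eq_one_iff hI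
    exact ⟨f, hf, by simp [monoEdgeSet_eq_of_nonempty hf.2.1, hcard]⟩

theorem ncard_edges_avoiding_add_ncard_edges_meeting [Finite V] (I : Set V) :
    {e | e ∈ G.edgeSet ∧ ∀ v ∈ e, v ∉ I}.ncard + {e | e ∈ G.edgeSet ∧ ∃ v ∈ e, v ∈ I}.ncard =
      G.edgeSet.ncard := by
  rw [← Set.ncard_inter_add_ncard_sdiff_eq_ncard G.edgeSet {e | ∃ v ∈ e, v ∈ I}, add_comm]
  simp only [Set.sdiff_eq, Set.compl_ofPred, not_exists, not_and]
  rfl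

end

theorem Nat.sInf_eq_sub_sSup {ι : Type*} {P : ι → Prop} {a b : ι → ℕ} {N : ℕ}
    (hP : ∃ i, P i) (hab : ∀ i, a i + b i = N) :
    sInf {n | ∃ i, P i ∧ a i = n} = N - sSup {n | ∃ i, P i ∧ b i = n} := by
  obtain ⟨i₀, hi₀⟩ := hP
  have hbdd : BddAbove {n | ∃ i, P i ∧ b i = n} := ⟨N, by rintro _ ⟨i, -, rfl⟩; grind⟩
  have hne_a : {n | ∃ i, P i ∧ a i = n}.Nonempty := ⟨a i₀, i₀, hi₀, rfl⟩
  have hne_b : {n | ∃ i, P i ∧ b i = n}.Nonempty := ⟨b i₀, i₀, hi₀, rfl⟩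
  apply le_antisymm
  · obtain ⟨i, hi, hbi⟩ := Nat.sSup_mem hne_b hbdd
    exact Nat.sInf_le ⟨i, hi, by grind⟩
  · obtain ⟨i, hi, hai⟩ := Nat.sInf_mem hne_a
    have := le_csSup hbdd ⟨i, hi, rfl⟩
    grind

theorem sparing_number_eq_min_over_indep {V : Type*} [Fintype V] (G : SimpleGraph V) :
    sparingNumber G = sInf {n | ∃ I : Set V, (∀ u ∈ I, ∀ v ∈ I, ¬ G.Adj u v) ∧
        {e | e ∈ G.edgeSet ∧ ∀ v ∈ e, v ∉ I}.ncard = n} ∧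
      sparingNumber G = G.edgeSet.ncard -
        sSup {n | ∃ I : Set V, (∀ u ∈ I, ∀ v ∈ I, ¬ G.Adj u v) ∧
          {e | e ∈ G.edgeSet ∧ ∃ v ∈ e, v ∈ I}.ncard = n} := by
  have hmin : sparingNumber G = sInf {n | ∃ I : Set V, (∀ u ∈ I, ∀ v ∈ I, ¬ G.Adj u v) ∧
      {e | e ∈ G.edgeSet ∧ ∀ v ∈ e, v ∉ I}.ncard = n} := by
    rw [sparingNumber, setOf_ncard_monoEdgeSet_eq]
  exact ⟨hmin, hmin.trans <|
    Nat.sInf_eq_sub_sSup ⟨∅, by simp⟩ ncard_edges_avoiding_add_ncard_edges_meeting⟩
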